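/- arXiv:2412.20159 — 7 statements merged into one kernel-verified Lean document; each statement's English description precedes it below -/
import Mathlib

section
/- Every nonempty family F of partial isometries on a complex Hilbert space H has an infimum in the Halmos–McLaughlin order: namely, the operator that agrees with the elements of F on the largest closed subspace of ⋂_{E∈F} (ker E)ᗮ on which all elements of F coincide, and vanishes on its orthogonal complement, is a partial isometry and is the greatest lower bound of F. -/
/-! Let `K` consist of the vectors that lie in every initial space `(ker E)ᗮ`, `E ∈ 𝓕`, and on
which all members of `𝓕` agree; it is a closed subspace. For any `E₀ ∈ 𝓕`, the operator
`G = E₀ P_K` has kernel `Kᗮ` (as `E₀` is injective on its initial space), so its initial space is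
`K`, on which it is isometric and agrees with every `E ∈ 𝓕`. Conversely, a partial isometry is
isometric at `x` only if `x` lies in its initial space; so if `W ≤ E` for all `E ∈ 𝓕`, each such
`E` is isometric on the initial space of `W`, which therefore lies in `K`, where `W` agrees with
`G`. -/

open ContinuousLinearMap

variable {H : Type*} [NormedAddCommGroup H] [InnerProductSpace ℂ H] [CompleteSpace H]

/-- A bounded operator is a partial isometry if it is isometric on `(ker V)ᗮ`. -/
def IsPartialIsometry (V : H →L[ℂ] H) : Prop :=
  ∀ x ∈ (LinearMap.ker (V : H →ₗ[ℂ] H))ᗮ, ‖V x‖ = ‖x‖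

/-- The Halmos–McLaughlin order: `E ≤ F` iff `F` agrees with `E` on the initial
space `(ker E)ᗮ` of `E`. -/
def HMle (E F : H →L[ℂ] H) : Prop :=
  ∀ x ∈ (LinearMap.ker (E : H →ₗ[ℂ] H))ᗮ, F x = E x

section StarProjection

variable {𝕜 E F : Type*} [RCLike 𝕜] [NormedAddCommGroup E] [InnerProductSpace 𝕜 E]
  [NormedAddCommGroup F] [NormedSpace 𝕜 F]

theorem ker_comp_starProjection {K : Submodule 𝕜 E} [K.HasOrthogonalProjection]
    {T : E →L[𝕜] F} (hK : K ≤ (LinearMap.ker (T : E →ₗ[𝕜] F))ᗮ) :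
    LinearMap.ker ((T ∘L K.starProjection : E →L[𝕜] F) : E →ₗ[𝕜] F) = Kᗮ := by
  ext x
  rw [LinearMap.mem_ker, ← K.starProjection_apply_eq_zero_iff]
  have hPx : K.starProjection x ∈ (LinearMap.ker (T : E →ₗ[𝕜] F))ᗮ :=
    hK (K.starProjection_apply_mem x)
  exact ⟨fun hTPx => (Submodule.mem_bot 𝕜).1 <|
    (LinearMap.ker (T : E →ₗ[𝕜] F)).inf_orthogonal_eq_bot ▸ ⟨hTPx, hPx⟩,
    fun hPx0 => by simp [hPx0]⟩

theorem ker_comp_starProjection_orthogonal {K : Submodule 𝕜 E} [K.HasOrthogonalProjection]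
    {T : E →L[𝕜] F} (hK : K ≤ (LinearMap.ker (T : E →ₗ[𝕜] F))ᗮ) :
    (LinearMap.ker ((T ∘L K.starProjection : E →L[𝕜] F) : E →ₗ[𝕜] F))ᗮ = K := by
  rw [ker_comp_starProjection hK, K.orthogonal_orthogonal]

end StarProjection

variable {X : Type*} [NormedAddCommGroup X] [InnerProductSpace ℂ X]

namespace IsPartialIsometry

theorem mem_ker_orthogonal_iff [CompleteSpace X] {V : X →L[ℂ] X} (hV : IsPartialIsometry V)
    {x : X} : x ∈ (LinearMap.ker (V : X →ₗ[ℂ] X))ᗮ ↔ ‖V x‖ = ‖x‖ := by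
  refine ⟨hV x, fun hx => ?_⟩
  set U := (LinearMap.ker (V : X →ₗ[ℂ] X))ᗮ
  have hU : Uᗮ = LinearMap.ker (V : X →ₗ[ℂ] X) := by
    rw [Submodule.orthogonal_orthogonal_eq_closure]
    exact (isClosed_ker V).submodule_topologicalClosure_eq
  have hVPx : V (U.starProjection x) = V x := by
    have hx' := U.sub_starProjection_mem_orthogonal x
    rw [hU, LinearMap.mem_ker] at hx'
    exact (sub_eq_zero.1 (by simpa using hx')).symm
  rw [U.mem_iff_norm_starProjection, ← hV _ (U.starProjection_apply_mem x), hVPx, hx]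

theorem comp_starProjection {V : X →L[ℂ] X} (hV : IsPartialIsometry V) {K : Submodule ℂ X}
    [K.HasOrthogonalProjection] (hK : K ≤ (LinearMap.ker (V : X →ₗ[ℂ] X))ᗮ) :
    IsPartialIsometry (V ∘L K.starProjection) := by
  intro x hx
  rw [ker_comp_starProjection_orthogonal hK] at hx
  simpa [K.starProjection_eq_self_iff.2 hx] using hV x (hK hx)

theorem ker_orthogonal_le_of_hmle [CompleteSpace X] {W E : X →L[ℂ] X} (hW : IsPartialIsometry W)
    (hE : IsPartialIsometry E) (hWE : HMle W E) :
    (LinearMap.ker (W : X →ₗ[ℂ] X))ᗮ ≤ (LinearMap.ker (E : X →ₗ[ℂ] X))ᗮ := fun x hx =>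
  hE.mem_ker_orthogonal_iff.2 <| by rw [hWE x hx, hW x hx]

end IsPartialIsometry

theorem hmle_comp_starProjection_iff {V F : X →L[ℂ] X} {K : Submodule ℂ X}
    [K.HasOrthogonalProjection] (hK : K ≤ (LinearMap.ker (V : X →ₗ[ℂ] X))ᗮ) :
    HMle (V ∘L K.starProjection) F ↔ ∀ x ∈ K, F x = V x := by
  unfold HMle
  rw [ker_comp_starProjection_orthogonal hK]
  refine forall₂_congr fun x hx => ?_
  rw [comp_apply, K.starProjection_eq_self_iff.2 hx]

noncomputable def coincidenceSubspace (𝓕 : Set (X →L[ℂ] X)) : Submodule ℂ X :=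
  (⨅ E ∈ 𝓕, (LinearMap.ker (E : X →ₗ[ℂ] X))ᗮ) ⊓
    ⨅ E ∈ 𝓕, ⨅ F ∈ 𝓕, LinearMap.ker ((E - F : X →L[ℂ] X) : X →ₗ[ℂ] X)

theorem mem_coincidenceSubspace {𝓕 : Set (X →L[ℂ] X)} {x : X} :
    x ∈ coincidenceSubspace 𝓕 ↔
      (∀ E ∈ 𝓕, x ∈ (LinearMap.ker (E : X →ₗ[ℂ] X))ᗮ) ∧ ∀ E ∈ 𝓕, ∀ F ∈ 𝓕, E x = F x := by
  simp [coincidenceSubspace, Submodule.mem_iInf, sub_eq_zero]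

theorem isClosed_coincidenceSubspace (𝓕 : Set (X →L[ℂ] X)) :
    IsClosed (coincidenceSubspace 𝓕 : Set X) := by
  simp only [coincidenceSubspace, Submodule.coe_inf, Submodule.coe_iInf]
  exact (isClosed_biInter fun E _ => Submodule.isClosed_orthogonal _).inter <|
    isClosed_biInter fun E _ => isClosed_biInter fun F _ => isClosed_ker (E - F)

instance [CompleteSpace X] (𝓕 : Set (X →L[ℂ] X)) : CompleteSpace (coincidenceSubspace 𝓕) :=
  (isClosed_coincidenceSubspace 𝓕).completeSpace_coe

theorem ker_orthogonal_le_coincidenceSubspace [CompleteSpace X] {𝓕 : Set (X →L[ℂ] X)}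
    (h𝓕 : ∀ V ∈ 𝓕, IsPartialIsometry V) {W : X →L[ℂ] X} (hW : IsPartialIsometry W)
    (hW𝓕 : ∀ E ∈ 𝓕, HMle W E) :
    (LinearMap.ker (W : X →ₗ[ℂ] X))ᗮ ≤ coincidenceSubspace 𝓕 := fun x hx =>
  mem_coincidenceSubspace.2
    ⟨fun E hE => hW.ker_orthogonal_le_of_hmle (h𝓕 E hE) (hW𝓕 E hE) hx,
      fun E hE F hF => by rw [hW𝓕 E hE x hx, hW𝓕 F hF x hx]⟩

theorem exists_infimum_of_partialIsometries (𝓕 : Set (H →L[ℂ] H))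
    (h𝓕 : ∀ V ∈ 𝓕, IsPartialIsometry V) (hne : 𝓕.Nonempty) :
    ∃ G : H →L[ℂ] H, IsPartialIsometry G ∧ (∀ E ∈ 𝓕, HMle G E) ∧
      ∀ W : H →L[ℂ] H, IsPartialIsometry W → (∀ E ∈ 𝓕, HMle W E) → HMle W G := by
  obtain ⟨E₀, hE₀⟩ := hne
  set K := coincidenceSubspace 𝓕
  have hK : K ≤ (LinearMap.ker (E₀ : H →ₗ[ℂ] H))ᗮ := fun x hx =>
    (mem_coincidenceSubspace.1 hx).1 E₀ hE₀
  refine ⟨E₀ ∘L K.starProjection, (h𝓕 E₀ hE₀).comp_starProjection hK, fun E hE =>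
    (hmle_comp_starProjection_iff hK).2 fun x hx => (mem_coincidenceSubspace.1 hx).2 E hE E₀ hE₀,
    fun W hW hW𝓕 x hx => ?_⟩
  have hxK : x ∈ K := ker_orthogonal_le_coincidenceSubspace h𝓕 hW hW𝓕 hx
  rw [comp_apply, K.starProjection_eq_self_iff.2 hxK, hW𝓕 E₀ hE₀ x hx]
end

section
/- Every nonempty family of partial isometries on a complex Hilbert space that is bounded above in the Halmos–McLaughlin order has a supremum in that order. -/
open ContinuousLinearMap

variable {H : Type*} [NormedAddCommGroup H] [InnerProductSpace ℂ H] [CompleteSpace H]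

/-! The supremum is the upper bound `U` cut down to the closed span `M` of the initial spaces
of the family, `S = U ∘ P_M`. A partial isometry is isometric exactly on its initial space, so
the initial space of each member lies in that of `U`; hence `M ⊆ (ker U)ᗮ`, and `S` is a partial
isometry with initial space `M` extending every member. Any other upper bound agrees with `S` on
each initial space, hence, being linear and continuous, on all of `M`. -/

section Restriction

variable {𝕜 E F : Type*} [RCLike 𝕜] [NormedAddCommGroup E] [InnerProductSpace 𝕜 E]
  [NormedAddCommGroup F] [NormedSpace 𝕜 F] (U : E →L[𝕜] F)

lemma ContinuousLinearMap.apply_starProjection_orthogonal_ker [CompleteSpace E] (x : E) :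
    U (U.kerᗮ.starProjection x) = U x := by
  have hker : x - U.kerᗮ.starProjection x ∈ U.ker := by
    have := U.kerᗮ.sub_starProjection_mem_orthogonal x
    rwa [Submodule.orthogonal_orthogonal_eq_closure,
      U.isClosed_ker.submodule_topologicalClosure_eq] at this
  rw [LinearMap.mem_ker, coe_coe, map_sub, sub_eq_zero] at hker
  exact hker.symm

variable {M : Submodule 𝕜 E} [M.HasOrthogonalProjection]

lemma ContinuousLinearMap.comp_starProjection_apply_of_mem {x : E} (hx : x ∈ M) :
    (U ∘L M.starProjection) x = U x := by
  rw [comp_apply, Submodule.starProjection_eq_self_iff.2 hx]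

lemma ContinuousLinearMap.ker_comp_starProjection (hM : M ≤ U.kerᗮ) :
    (U ∘L M.starProjection).ker = Mᗮ := by
  ext x
  rw [← M.ker_starProjection]
  simp only [LinearMap.mem_ker, coe_coe, comp_apply]
  refine ⟨fun h => ?_, fun h => by rw [h, map_zero]⟩
  simpa using (Submodule.orthogonal_disjoint U.ker).le_bot ⟨h, hM (M.starProjection_apply_mem x)⟩

end Restriction

lemma IsPartialIsometry.comp_starProjection_s6 {E : Type*} [NormedAddCommGroup E]
    [InnerProductSpace ℂ E] {U : E →L[ℂ] E} {M : Submodule ℂ E} [M.HasOrthogonalProjection]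
    (hU : IsPartialIsometry U) (hM : M ≤ U.kerᗮ) :
    IsPartialIsometry (U ∘L M.starProjection) := by
  intro x hx
  rw [U.ker_comp_starProjection hM, Submodule.orthogonal_orthogonal] at hx
  rw [U.comp_starProjection_apply_of_mem hx, hU x (hM hx)]

namespace IsPartialIsometry

variable {U : H →L[ℂ] H}

lemma norm_apply (hU : IsPartialIsometry U) (x : H) :
    ‖U x‖ = ‖U.kerᗮ.starProjection x‖ := by
  rw [← U.apply_starProjection_orthogonal_ker, hU _ (Submodule.starProjection_apply_mem _ _)]

lemma mem_orthogonal_ker_iff (hU : IsPartialIsometry U) {x : H} :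
    x ∈ U.kerᗮ ↔ ‖U x‖ = ‖x‖ := by
  rw [hU.norm_apply, Submodule.mem_iff_norm_starProjection]

end IsPartialIsometry

lemma HMle.orthogonal_ker_le {E F : H →L[ℂ] H} (hE : IsPartialIsometry E)
    (hF : IsPartialIsometry F) (h : HMle E F) : E.kerᗮ ≤ F.kerᗮ := fun x hx =>
  hF.mem_orthogonal_ker_iff.2 <| (h x hx).symm ▸ hE x hx

section InitialSpan

variable {𝕜 E : Type*} [RCLike 𝕜] [NormedAddCommGroup E] [InnerProductSpace 𝕜 E]

def initialSpan (𝓕 : Set (E →L[𝕜] E)) : Submodule 𝕜 E :=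
  (⨆ T ∈ 𝓕, T.kerᗮ).topologicalClosure

variable {𝓕 : Set (E →L[𝕜] E)}

instance [CompleteSpace E] : CompleteSpace (initialSpan 𝓕) :=
  (Submodule.isClosed_topologicalClosure _).completeSpace_coe

lemma orthogonal_ker_le_initialSpan {T : E →L[𝕜] E} (hT : T ∈ 𝓕) : T.kerᗮ ≤ initialSpan 𝓕 :=
  (le_biSup (fun T : E →L[𝕜] E => T.kerᗮ) hT).trans (Submodule.le_topologicalClosure _)

lemma initialSpan_le {K : Submodule 𝕜 E} (hK : IsClosed (K : Set E))
    (h : ∀ T ∈ 𝓕, T.kerᗮ ≤ K) : initialSpan 𝓕 ≤ K :=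
  Submodule.topologicalClosure_minimal _ (iSup₂_le h) hK

lemma eqOn_initialSpan {A B : E →L[𝕜] E} (h : ∀ T ∈ 𝓕, ∀ x ∈ T.kerᗮ, A x = B x) :
    ∀ x ∈ initialSpan 𝓕, A x = B x := fun _ hx =>
  sub_eq_zero.1 <| initialSpan_le (A - B).isClosed_ker
    (fun T hT y hy => sub_eq_zero.2 (h T hT y hy)) hx

end InitialSpan

lemma initialSpan_le_orthogonal_ker {𝓕 : Set (H →L[ℂ] H)} {U : H →L[ℂ] H}
    (h𝓕 : ∀ E ∈ 𝓕, IsPartialIsometry E) (hU : IsPartialIsometry U)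
    (hUub : ∀ E ∈ 𝓕, HMle E U) : initialSpan 𝓕 ≤ U.kerᗮ :=
  initialSpan_le (Submodule.isClosed_orthogonal _) fun E hE =>
    (hUub E hE).orthogonal_ker_le (h𝓕 E hE) hU

theorem exists_supremum_of_bddAbove_general (𝓕 : Set (H →L[ℂ] H))
    (h𝓕 : ∀ V ∈ 𝓕, IsPartialIsometry V)
    (hbdd : ∃ U : H →L[ℂ] H, IsPartialIsometry U ∧ ∀ E ∈ 𝓕, HMle E U) :
    ∃ S : H →L[ℂ] H, IsPartialIsometry S ∧ (∀ E ∈ 𝓕, HMle E S) ∧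
      ∀ W : H →L[ℂ] H, IsPartialIsometry W → (∀ E ∈ 𝓕, HMle E W) → HMle S W := by
  obtain ⟨U, hU, hUub⟩ := hbdd
  set M := initialSpan 𝓕
  have hMU : M ≤ U.kerᗮ := initialSpan_le_orthogonal_ker h𝓕 hU hUub
  have hS : ∀ E ∈ 𝓕, HMle E (U ∘L M.starProjection) := fun E hE x hx => by
    rw [U.comp_starProjection_apply_of_mem (orthogonal_ker_le_initialSpan hE hx), hUub E hE x hx]
  refine ⟨U ∘L M.starProjection, hU.comp_starProjection_s6 hMU, hS, fun W _ hW x hx => ?_⟩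
  rw [U.ker_comp_starProjection hMU, Submodule.orthogonal_orthogonal] at hx
  exact eqOn_initialSpan (fun E hE y hy => (hW E hE y hy).trans (hS E hE y hy).symm) x hx

theorem exists_supremum_of_bddAbove (𝓕 : Set (H →L[ℂ] H))
    (h𝓕 : ∀ V ∈ 𝓕, IsPartialIsometry V) (hne : 𝓕.Nonempty)
    (hbdd : ∃ U : H →L[ℂ] H, IsPartialIsometry U ∧ ∀ E ∈ 𝓕, HMle E U) :
    ∃ S : H →L[ℂ] H, IsPartialIsometry S ∧ (∀ E ∈ 𝓕, HMle E S) ∧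
      ∀ W : H →L[ℂ] H, IsPartialIsometry W → (∀ E ∈ 𝓕, HMle E W) → HMle S W :=
  exists_supremum_of_bddAbove_general 𝓕 h𝓕 hbdd
end

section
/- Every totally ordered family of partial isometries on a complex Hilbert space (in the Halmos–McLaughlin order) has an upper bound, hence a supremum, in the Halmos–McLaughlin order. -/
open ContinuousLinearMap

variable {H : Type*} [NormedAddCommGroup H] [InnerProductSpace ℂ H] [CompleteSpace H]

/-!
Restricting each partial isometry `E` to its initial space `(ker E)ᗮ` turns the Halmos–McLaughlin
order into the extension order of partially defined linear maps: `E ≤ F` forces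
`(ker E)ᗮ ⊆ (ker F)ᗮ`, because a partial isometry preserves the norm of `x` only when `x` lies in
its initial space. A chain of such restrictions is directed, so it has a supremum `T`, defined on
the union of the initial spaces and isometric there. Extending `T` by continuity to the closure `M`
of its domain and composing with the orthogonal projection onto `M` gives a partial isometry `U`
with initial space `M` lying above the family. Any upper bound agrees with `T` on the domain of
`T`, hence with `U` on `M`, so `U` is the supremum.
-/

theorem LinearIsometry.exists_extension_topologicalClosure {𝕜 E F : Type*}
    [NontriviallyNormedField 𝕜] [NormedAddCommGroup E] [NormedSpace 𝕜 E]
    [NormedAddCommGroup F] [NormedSpace 𝕜 F] [CompleteSpace F]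
    {K : Submodule 𝕜 E} (T : K →ₗᵢ[𝕜] F) :
    ∃ V : K.topologicalClosure →ₗᵢ[𝕜] F,
      ∀ x : K, V (Submodule.inclusion K.le_topologicalClosure x) = T x := by
  let e : K →ₗᵢ[𝕜] K.topologicalClosure :=
    { Submodule.inclusion K.le_topologicalClosure with norm_map' := fun _ => rfl }
  have he_dense : DenseRange e :=
    (denseRange_inclusion_iff K.le_topologicalClosure).2 K.topologicalClosure_coe.subset
  have he_unif : IsUniformInducing e := e.isometry.isUniformInducing
  let V := T.toContinuousLinearMap.extend e.toContinuousLinearMap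
  have hV : ∀ x : K, V (e x) = T x := extend_eq _ he_dense he_unif
  have hV_norm : ∀ y, ‖V y‖ = ‖y‖ :=
    isClosed_property he_dense (isClosed_eq (by fun_prop) continuous_norm)
      fun x => by rw [hV, T.norm_map, e.norm_map]
  exact ⟨{ V.toLinearMap with norm_map' := hV_norm }, hV⟩

theorem Submodule.ker_comp_orthogonalProjectionOnto {𝕜 E F : Type*} [RCLike 𝕜]
    [NormedAddCommGroup E] [InnerProductSpace 𝕜 E] [NormedAddCommGroup F] [NormedSpace 𝕜 F]
    (M : Submodule 𝕜 E) [M.HasOrthogonalProjection] (V : M →ₗᵢ[𝕜] F) :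
    LinearMap.ker ((V.toContinuousLinearMap ∘L M.orthogonalProjectionOnto : E →L[𝕜] F) :
      E →ₗ[𝕜] F) = Mᗮ := by
  ext x
  simp only [LinearMap.mem_ker, coe_coe, comp_apply, LinearIsometry.coe_toContinuousLinearMap,
    map_eq_zero_iff V V.injective, Submodule.orthogonalProjectionOnto_eq_zero_iff]

theorem LinearPMap.norm_sSup_apply {𝕜 E F : Type*} [NontriviallyNormedField 𝕜]
    [NormedAddCommGroup E] [NormedSpace 𝕜 E] [NormedAddCommGroup F] [NormedSpace 𝕜 F]
    {c : Set (E →ₗ.[𝕜] F)} (hc : DirectedOn (· ≤ ·) c)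
    (hiso : ∀ f ∈ c, ∀ x : f.domain, ‖f x‖ = ‖(x : E)‖) (x : (LinearPMap.sSup c hc).domain) :
    ‖LinearPMap.sSup c hc x‖ = ‖(x : E)‖ := by
  rcases c.eq_empty_or_nonempty with rfl | hne
  · have hx : x = 0 := Subtype.ext (by simpa [LinearPMap.domain_sSup] using x.2)
    simp [hx]
  · obtain ⟨f, hf, hxf⟩ := (LinearPMap.mem_domain_sSup_iff hne hc).1 x.2
    rw [← hiso f hf ⟨x, hxf⟩, ← LinearPMap.sSup_apply hc hf ⟨x, hxf⟩]

theorem LinearPMap.le_toPMap_top_iff {R E F : Type*} [Ring R] [AddCommGroup E] [Module R E]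
    [AddCommGroup F] [Module R F] {T : E →ₗ.[R] F} {f : E →ₗ[R] F} :
    T ≤ f.toPMap ⊤ ↔ ∀ x : T.domain, f x = T x := by
  refine ⟨fun h x => (h.2 (y := ⟨x, trivial⟩) rfl).symm, fun h => ⟨le_top, ?_⟩⟩
  rintro x y (hxy : (x : E) = y)
  change T x = f y
  rw [← hxy, h x]

section
omit [CompleteSpace H]

theorem Submodule.isPartialIsometry_comp_orthogonalProjectionOnto (M : Submodule ℂ H)
    [M.HasOrthogonalProjection] (V : M →ₗᵢ[ℂ] H) :
    IsPartialIsometry (V.toContinuousLinearMap ∘L M.orthogonalProjectionOnto) := by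
  intro x hx
  rw [M.ker_comp_orthogonalProjectionOnto, M.orthogonal_orthogonal] at hx
  simp [orthogonalProjectionOnto_mem_subspace_eq_self ⟨x, hx⟩]

noncomputable def initialRestriction (E : H →L[ℂ] H) : H →ₗ.[ℂ] H :=
  (E : H →ₗ[ℂ] H).toPMap (LinearMap.ker (E : H →ₗ[ℂ] H))ᗮ

theorem hMle_iff_initialRestriction_le_toPMap {E F : H →L[ℂ] H} :
    HMle E F ↔ initialRestriction E ≤ (F : H →ₗ[ℂ] H).toPMap ⊤ := by
  rw [LinearPMap.le_toPMap_top_iff]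
  exact ⟨fun h x => h x x.2, fun h x hx => h ⟨x, hx⟩⟩

theorem hMle_of_le_toPMap {T : H →ₗ.[ℂ] H} {U W : H →L[ℂ] H}
    (hU : (LinearMap.ker (U : H →ₗ[ℂ] H))ᗮ = T.domain.topologicalClosure)
    (hTU : T ≤ (U : H →ₗ[ℂ] H).toPMap ⊤) (hTW : T ≤ (W : H →ₗ[ℂ] H).toPMap ⊤) : HMle U W := by
  rw [LinearPMap.le_toPMap_top_iff] at hTU hTW
  have hWU : Set.EqOn W U T.domain := fun x hx =>
    (hTW ⟨x, hx⟩).trans (hTU ⟨x, hx⟩).symm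
  intro x hx
  rw [hU, ← SetLike.mem_coe, Submodule.topologicalClosure_coe] at hx
  exact hWU.closure W.continuous U.continuous hx

end

theorem IsPartialIsometry.mem_orthogonal_ker_of_norm_apply_eq {F : H →L[ℂ] H}
    (hF : IsPartialIsometry F) {x : H} (hx : ‖F x‖ = ‖x‖) :
    x ∈ (LinearMap.ker (F : H →ₗ[ℂ] H))ᗮ := by
  obtain ⟨y, hy, z, hz, rfl⟩ := (LinearMap.ker (F : H →ₗ[ℂ] H)).exists_add_mem_mem_orthogonal x
  have hFyz : F (y + z) = F z := by
    rw [map_add, show F y = 0 from hy, zero_add]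
  have hpyth : ‖y + z‖ * ‖y + z‖ = ‖y‖ * ‖y‖ + ‖z‖ * ‖z‖ :=
    norm_add_sq_eq_norm_sq_add_norm_sq_of_inner_eq_zero y z (hz y hy)
  rw [← hx, hFyz, hF z hz] at hpyth
  have hy0 : y = 0 := by simpa using hpyth
  simpa [hy0] using hz

theorem HMle.initialRestriction_le {E F : H →L[ℂ] H} (hE : IsPartialIsometry E)
    (hF : IsPartialIsometry F) (h : HMle E F) : initialRestriction E ≤ initialRestriction F :=
  ⟨fun x hx => hF.mem_orthogonal_ker_of_norm_apply_eq (by rw [h x hx, hE x hx]),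
    fun x y (hxy : (x : H) = y) => show E x = F y by rw [← hxy, h x x.2]⟩

theorem LinearPMap.exists_isPartialIsometry_le_toPMap (T : H →ₗ.[ℂ] H)
    (hT : ∀ x, ‖T x‖ = ‖(x : H)‖) :
    ∃ U : H →L[ℂ] H, IsPartialIsometry U ∧
      (LinearMap.ker (U : H →ₗ[ℂ] H))ᗮ = T.domain.topologicalClosure ∧
      T ≤ (U : H →ₗ[ℂ] H).toPMap ⊤ := by
  set M := T.domain.topologicalClosure
  have : CompleteSpace M := T.domain.isClosed_topologicalClosure.completeSpace_coe
  obtain ⟨V, hV⟩ : ∃ V : M →ₗᵢ[ℂ] H, ∀ x, V (Submodule.inclusion _ x) = T x :=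
    LinearIsometry.exists_extension_topologicalClosure ⟨T.toFun, hT⟩
  refine ⟨V.toContinuousLinearMap ∘L M.orthogonalProjectionOnto,
    M.isPartialIsometry_comp_orthogonalProjectionOnto V,
    by rw [M.ker_comp_orthogonalProjectionOnto, M.orthogonal_orthogonal],
    LinearPMap.le_toPMap_top_iff.2 fun x => ?_⟩
  change V (M.orthogonalProjectionOnto x) = T x
  rw [← hV x]
  congr 1
  exact M.orthogonalProjectionOnto_mem_subspace_eq_self (Submodule.inclusion _ x)

theorem exists_supremum_of_totallyOrdered (𝓕 : Set (H →L[ℂ] H))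
    (h𝓕 : ∀ V ∈ 𝓕, IsPartialIsometry V)
    (hTO : ∀ E ∈ 𝓕, ∀ F ∈ 𝓕, HMle E F ∨ HMle F E) :
    (∃ U : H →L[ℂ] H, IsPartialIsometry U ∧ ∀ E ∈ 𝓕, HMle E U) ∧
    ∃ S : H →L[ℂ] H, IsPartialIsometry S ∧ (∀ E ∈ 𝓕, HMle E S) ∧
      ∀ W : H →L[ℂ] H, IsPartialIsometry W → (∀ E ∈ 𝓕, HMle E W) → HMle S W := by
  have hc : DirectedOn (· ≤ ·) (initialRestriction '' 𝓕) := by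
    rintro _ ⟨E, hE, rfl⟩ _ ⟨F, hF, rfl⟩
    rcases hTO E hE F hF with h | h
    · exact ⟨_, ⟨F, hF, rfl⟩, h.initialRestriction_le (h𝓕 E hE) (h𝓕 F hF), le_rfl⟩
    · exact ⟨_, ⟨E, hE, rfl⟩, le_rfl, h.initialRestriction_le (h𝓕 F hF) (h𝓕 E hE)⟩
  set T := LinearPMap.sSup _ hc
  have hT : ∀ x, ‖T x‖ = ‖(x : H)‖ := LinearPMap.norm_sSup_apply hc <| by
    rintro _ ⟨E, hE, rfl⟩ x
    exact h𝓕 E hE x x.2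
  obtain ⟨U, hU, hU_ker, hTU⟩ := T.exists_isPartialIsometry_le_toPMap hT
  have hU_ub : ∀ E ∈ 𝓕, HMle E U := fun E hE =>
    hMle_iff_initialRestriction_le_toPMap.2 ((LinearPMap.le_sSup hc ⟨E, hE, rfl⟩).trans hTU)
  refine ⟨⟨U, hU, hU_ub⟩, U, hU, hU_ub, fun W _ hW => hMle_of_le_toPMap hU_ker hTU ?_⟩
  exact LinearPMap.sSup_le hc <| by
    rintro _ ⟨E, hE, rfl⟩
    exact hMle_iff_initialRestriction_le_toPMap.1 (hW E hE)
end

section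
/- If F is a totally ordered family of partial isometries on a complex Hilbert space H, then each element E of F preserves F, i.e., for all F' ∈ F, E maps the initial space of F' into the final space of F'. -/
open ContinuousLinearMap

variable {H : Type*} [NormedAddCommGroup H] [InnerProductSpace ℂ H] [CompleteSpace H]

/-- Splitting `x = k + y` with `k ∈ ker E` and `y ∈ (ker E)ᗮ` gives `E x = E y = F y`. -/
theorem HMle.range_le {E F : H →L[ℂ] H} (h : HMle E F) :
    LinearMap.range (E : H →ₗ[ℂ] H) ≤ LinearMap.range (F : H →ₗ[ℂ] H) := by
  have : CompleteSpace (LinearMap.ker (E : H →ₗ[ℂ] H)) := (isClosed_ker E).completeSpace_coe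
  rintro _ ⟨x, rfl⟩
  obtain ⟨k, hk, y, hy, rfl⟩ := (LinearMap.ker (E : H →ₗ[ℂ] H)).exists_add_mem_mem_orthogonal x
  refine ⟨y, ?_⟩
  simp only [coe_coe, map_add, LinearMap.mem_ker.mp hk, zero_add, h y hy]

theorem mem_preserves_of_totallyOrdered_general (𝓕 : Set (H →L[ℂ] H))
    (hTO : ∀ E ∈ 𝓕, ∀ F ∈ 𝓕, HMle E F ∨ HMle F E)
    (E : H →L[ℂ] H) (hE : E ∈ 𝓕) :
    ∀ F' ∈ 𝓕, ∀ x ∈ (LinearMap.ker (F' : H →ₗ[ℂ] H))ᗮ,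
      E x ∈ closure (LinearMap.range (F' : H →ₗ[ℂ] H) : Set H) := by
  intro F' hF' x hx
  refine subset_closure ?_
  rcases hTO E hE F' hF' with hEF | hFE
  · exact hEF.range_le (LinearMap.mem_range_self (E : H →ₗ[ℂ] H) x)
  · exact ⟨x, (hFE x hx).symm⟩

theorem mem_preserves_of_totallyOrdered (𝓕 : Set (H →L[ℂ] H))
    (h𝓕 : ∀ V ∈ 𝓕, IsPartialIsometry V)
    (hTO : ∀ E ∈ 𝓕, ∀ F ∈ 𝓕, HMle E F ∨ HMle F E)
    (E : H →L[ℂ] H) (hE : E ∈ 𝓕) :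
    ∀ F' ∈ 𝓕, ∀ x ∈ (LinearMap.ker (F' : H →ₗ[ℂ] H))ᗮ,
      E x ∈ closure (LinearMap.range (F' : H →ₗ[ℂ] H) : Set H) :=
  mem_preserves_of_totallyOrdered_general 𝓕 hTO E hE
end

section
/- Let F be a totally ordered family of partial isometries on H such that for every E ∈ F, either ran E ⊆ (ker E)ᗮ or ran E is dense in H. Then the set A_F of operators mapping, for every E ∈ F, the initial space of E into the final space of E is closed under operator composition, i.e., A_F is a subalgebra of B(H). -/
open ContinuousLinearMap

variable {H : Type*} [NormedAddCommGroup H] [InnerProductSpace ℂ H] [CompleteSpace H]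

theorem Set.MapsTo.comp_closure_of_subset_or_dense {X : Type*} [TopologicalSpace X]
    {K R : Set X} (hK : IsClosed K) (hR : R ⊆ K ∨ Dense R) {S T : X → X}
    (hS : Set.MapsTo S K (closure R)) (hT : Set.MapsTo T K (closure R)) :
    Set.MapsTo (S ∘ T) K (closure R) := by
  rcases hR with hRK | hdense
  · exact hS.comp (hT.mono_right (closure_minimal hRK hK))
  · simp only [hdense.closure_eq, Set.mapsTo_univ]

theorem AF_closed_under_composition_general (𝓕 : Set (H →L[ℂ] H))
    (hrange : ∀ E ∈ 𝓕, LinearMap.range (E : H →ₗ[ℂ] H) ≤ (LinearMap.ker (E : H →ₗ[ℂ] H))ᗮ ∨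
      Dense (LinearMap.range (E : H →ₗ[ℂ] H) : Set H))
    (S T : H →L[ℂ] H)
    (hS : ∀ E ∈ 𝓕, ∀ x ∈ (LinearMap.ker (E : H →ₗ[ℂ] H))ᗮ, S x ∈ closure (LinearMap.range (E : H →ₗ[ℂ] H) : Set H))
    (hT : ∀ E ∈ 𝓕, ∀ x ∈ (LinearMap.ker (E : H →ₗ[ℂ] H))ᗮ, T x ∈ closure (LinearMap.range (E : H →ₗ[ℂ] H) : Set H)) :
    ∀ E ∈ 𝓕, ∀ x ∈ (LinearMap.ker (E : H →ₗ[ℂ] H))ᗮ,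
      (S ∘L T) x ∈ closure (LinearMap.range (E : H →ₗ[ℂ] H) : Set H) := fun E hE =>
  Set.MapsTo.comp_closure_of_subset_or_dense (S := S) (T := T) (Submodule.isClosed_orthogonal _)
    (hrange E hE) (hS E hE) (hT E hE)

theorem AF_closed_under_composition (𝓕 : Set (H →L[ℂ] H))
    (h𝓕 : ∀ V ∈ 𝓕, IsPartialIsometry V)
    (hTO : ∀ E ∈ 𝓕, ∀ F ∈ 𝓕, HMle E F ∨ HMle F E)
    (hrange : ∀ E ∈ 𝓕, LinearMap.range (E : H →ₗ[ℂ] H) ≤ (LinearMap.ker (E : H →ₗ[ℂ] H))ᗮ ∨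
      Dense (LinearMap.range (E : H →ₗ[ℂ] H) : Set H))
    (S T : H →L[ℂ] H)
    (hS : ∀ E ∈ 𝓕, ∀ x ∈ (LinearMap.ker (E : H →ₗ[ℂ] H))ᗮ, S x ∈ closure (LinearMap.range (E : H →ₗ[ℂ] H) : Set H))
    (hT : ∀ E ∈ 𝓕, ∀ x ∈ (LinearMap.ker (E : H →ₗ[ℂ] H))ᗮ, T x ∈ closure (LinearMap.range (E : H →ₗ[ℂ] H) : Set H)) :
    ∀ E ∈ 𝓕, ∀ x ∈ (LinearMap.ker (E : H →ₗ[ℂ] H))ᗮ,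
      (S ∘L T) x ∈ closure (LinearMap.range (E : H →ₗ[ℂ] H) : Set H) :=
  AF_closed_under_composition_general 𝓕 hrange S T hS hT
end

section
/- Let x = (x₁,…,x_n) and y = (y₁,…,y_n) be vectors in ℂⁿ and K ≥ 0 such that for every 1 ≤ r ≤ n, ∑_{i=r}^{n} |y_i|² ≤ K² ∑_{i=r}^{n} |x_i|². Then there exists an upper triangular n×n complex matrix A with operator norm ‖A‖ ≤ K and A x = y. -/
/-!
Induct on `n`, peeling off the first row. If `B` solves the problem for the tails of `x` and `y`,
put `B` in the lower right corner of `A`; it remains to choose the first row `w` with `w ⬝ᵥ x = y 0`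
and `|w ⬝ᵥ v|² ≤ K²‖v‖² - ‖T v‖²` for all `v`, where `T = B ∘ tail`. Since `‖T‖ ≤ K`, the operator
`K² - T†T` is positive, so it equals `S†S` for some `S`, and the right-hand side is `‖S v‖²`. The tail
hypothesis at `r = 0` says `|y 0| ≤ ‖S x‖`, so it suffices to take `w ⬝ᵥ v = ⟪u, S v⟫` with `‖u‖ ≤ 1`
and `⟪u, S x⟫ = y 0`.
-/

open ContinuousLinearMap Matrix WithLp
open scoped InnerProductSpace

theorem exists_norm_le_one_inner_eq {𝕜 E : Type*} [RCLike 𝕜] [NormedAddCommGroup E]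
    [InnerProductSpace 𝕜 E] {u : E} {c : 𝕜} (hc : ‖c‖ ≤ ‖u‖) :
    ∃ w : E, ‖w‖ ≤ 1 ∧ ⟪w, u⟫_𝕜 = c := by
  rcases eq_or_ne u 0 with rfl | hu
  · exact ⟨0, by simp, by simpa [eq_comm] using hc⟩
  have hu' : 0 < ‖u‖ := norm_pos_iff.mpr hu
  refine ⟨(starRingEnd 𝕜 c / (‖u‖ : 𝕜) ^ 2) • u, ?_, ?_⟩
  · rw [norm_smul, norm_div, norm_pow, RCLike.norm_conj, RCLike.norm_ofReal, abs_norm,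
      div_mul_eq_mul_div, pow_two, ← div_div, mul_div_assoc, div_self hu'.ne', mul_one]
    exact div_le_one_of_le₀ hc hu'.le
  · rw [inner_smul_left, inner_self_eq_norm_sq_to_K]
    simp [hu]

section Defect

variable {E F : Type*} [NormedAddCommGroup E] [InnerProductSpace ℂ E] [CompleteSpace E]
  [NormedAddCommGroup F] [InnerProductSpace ℂ F] [CompleteSpace F]

theorem ContinuousLinearMap.exists_norm_apply_sq_eq_sub (T : E →L[ℂ] F) {K : ℝ} (hT : ‖T‖ ≤ K) :
    ∃ S : E →L[ℂ] E, ∀ v, ‖S v‖ ^ 2 = K ^ 2 * ‖v‖ ^ 2 - ‖T v‖ ^ 2 := by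
  set P : E →L[ℂ] E := ((K ^ 2 : ℝ) : ℂ) • 1 - adjoint T ∘L T
  have hP : ∀ v, ⟪P v, v⟫_ℂ = ((K ^ 2 * ‖v‖ ^ 2 - ‖T v‖ ^ 2 : ℝ) : ℂ) := fun v => by
    simp [P, adjoint_inner_left, inner_self_eq_norm_sq_to_K, mul_comm]
  have hP_nonneg : 0 ≤ P := by
    rw [nonneg_iff_isPositive, isPositive_iff_complex]
    intro v
    rw [hP, RCLike.re_to_complex, Complex.ofReal_re]
    refine ⟨rfl, sub_nonneg.mpr ?_⟩
    rw [← mul_pow]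
    exact pow_le_pow_left₀ (norm_nonneg _) (T.le_of_opNorm_le hT v) 2
  obtain ⟨S, hS⟩ := CStarAlgebra.nonneg_iff_eq_star_mul_self.mp hP_nonneg
  refine ⟨S, fun v => ?_⟩
  rw [apply_norm_sq_eq_inner_adjoint_left, ← star_eq_adjoint, ← mul_def, ← hS, hP,
    RCLike.re_to_complex, Complex.ofReal_re]

theorem ContinuousLinearMap.exists_inner_eq_and_norm_inner_sq_add_le (T : E →L[ℂ] F) {K : ℝ}
    (hT : ‖T‖ ≤ K) {x : E} {c : ℂ} (hc : ‖c‖ ^ 2 + ‖T x‖ ^ 2 ≤ K ^ 2 * ‖x‖ ^ 2) :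
    ∃ w : E, ⟪w, x⟫_ℂ = c ∧ ∀ v, ‖⟪w, v⟫_ℂ‖ ^ 2 + ‖T v‖ ^ 2 ≤ K ^ 2 * ‖v‖ ^ 2 := by
  obtain ⟨S, hS⟩ := T.exists_norm_apply_sq_eq_sub hT
  obtain ⟨u, hu, hux⟩ := exists_norm_le_one_inner_eq (u := S x) (c := c) <| by
    rw [← sq_le_sq₀ (norm_nonneg _) (norm_nonneg _), hS]
    linarith
  refine ⟨adjoint S u, by rw [adjoint_inner_left, hux], fun v => ?_⟩
  have huSv : ‖⟪u, S v⟫_ℂ‖ ≤ ‖S v‖ :=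
    (norm_inner_le_norm u (S v)).trans (mul_le_of_le_one_left (norm_nonneg _) hu)
  rw [adjoint_inner_left]
  nlinarith [hS v, norm_nonneg ⟪u, S v⟫_ℂ]

end Defect

theorem EuclideanSpace.norm_sq_toLp_cons {𝕜 : Type*} [RCLike 𝕜] {n : ℕ} (a : 𝕜)
    (u : Fin n → 𝕜) :
    ‖toLp 2 (Fin.cons a u : Fin (n + 1) → 𝕜)‖ ^ 2 = ‖a‖ ^ 2 + ‖toLp 2 u‖ ^ 2 := by
  simp only [EuclideanSpace.norm_sq_eq, Fin.sum_univ_succ, Fin.cons_zero, Fin.cons_succ]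

theorem EuclideanSpace.norm_toLp_tail_le {𝕜 : Type*} [RCLike 𝕜] {n : ℕ}
    (v : EuclideanSpace 𝕜 (Fin (n + 1))) : ‖toLp 2 (Fin.tail (ofLp v))‖ ≤ ‖v‖ := by
  rw [← sq_le_sq₀ (norm_nonneg _) (norm_nonneg _), ← toLp_ofLp 2 v,
    ← Fin.cons_self_tail (ofLp v), norm_sq_toLp_cons, Fin.tail_cons, ofLp_toLp]
  exact le_add_of_nonneg_left (by positivity)

section Bordering

variable {R : Type*} {n : ℕ}

theorem Matrix.blockTriangular_of_vecCons [Zero R] (r : Fin (n + 1) → R)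
    {B : Matrix (Fin n) (Fin n) R} (hB : B.BlockTriangular id) :
    (of (vecCons r fun i => vecCons 0 (B i))).BlockTriangular id := by
  intro i j hji
  cases i using Fin.cases with
  | zero => exact absurd hji (Fin.not_lt_zero j)
  | succ i =>
    cases j using Fin.cases with
    | zero => rfl
    | succ j => exact hB (Fin.succ_lt_succ_iff.mp hji)

variable [CommSemiring R]

theorem Matrix.of_vecCons_zero_mulVec (B : Matrix (Fin n) (Fin n) R) (v : Fin (n + 1) → R) :
    of (fun i => vecCons 0 (B i)) *ᵥ v = B *ᵥ Fin.tail v := by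
  ext i
  simp only [mulVec, of_apply, cons_dotProduct, zero_mul, zero_add]
  rfl

theorem Matrix.of_vecCons_vecCons_mulVec (r : Fin (n + 1) → R) (B : Matrix (Fin n) (Fin n) R)
    (v : Fin (n + 1) → R) :
    of (vecCons r fun i => vecCons 0 (B i)) *ᵥ v = vecCons (r ⬝ᵥ v) (B *ᵥ Fin.tail v) := by
  rw [cons_mulVec, of_vecCons_zero_mulVec]

end Bordering

theorem exists_upperTriangular_mulVec_eq_of_tail {n : ℕ} {K : ℝ} {x y : Fin (n + 1) → ℂ}
    {B : Matrix (Fin n) (Fin n) ℂ} (hB : B.BlockTriangular id)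
    (hBK : ‖toEuclideanCLM (𝕜 := ℂ) B‖ ≤ K) (hBx : B *ᵥ Fin.tail x = Fin.tail y)
    (hxy : ∑ i, ‖y i‖ ^ 2 ≤ K ^ 2 * ∑ i, ‖x i‖ ^ 2) :
    ∃ A : Matrix (Fin (n + 1)) (Fin (n + 1)) ℂ,
      A.BlockTriangular id ∧ ‖toEuclideanCLM (𝕜 := ℂ) A‖ ≤ K ∧ A *ᵥ x = y := by
  have hK : 0 ≤ K := (norm_nonneg _).trans hBK
  set T : EuclideanSpace ℂ (Fin (n + 1)) →L[ℂ] EuclideanSpace ℂ (Fin n) :=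
    LinearMap.toContinuousLinearMap (toEuclideanLin (of fun i => vecCons 0 (B i)))
  have hTv : ∀ v, T v = toEuclideanCLM (𝕜 := ℂ) B (toLp 2 (Fin.tail (ofLp v))) := fun v => by
    rw [toEuclideanCLM_toLp, ← of_vecCons_zero_mulVec]
    exact toLpLin_apply 2 2 _ v
  have hT : ‖T‖ ≤ K := T.opNorm_le_bound hK fun v => by
    rw [hTv]
    exact (le_of_opNorm_le _ hBK _).trans
      (mul_le_mul_of_nonneg_left (EuclideanSpace.norm_toLp_tail_le v) hK)
  obtain ⟨w, hwx, hw⟩ :=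
    T.exists_inner_eq_and_norm_inner_sq_add_le hT (x := toLp 2 x) (c := y 0) <| by
      rw [hTv, ofLp_toLp, toEuclideanCLM_toLp, hBx, ← EuclideanSpace.norm_sq_toLp_cons,
        Fin.cons_self_tail, EuclideanSpace.norm_sq_eq, EuclideanSpace.norm_sq_eq]
      exact hxy
  set A : Matrix (Fin (n + 1)) (Fin (n + 1)) ℂ :=
    of (vecCons (star (ofLp w)) fun i => vecCons 0 (B i))
  have hAv : ∀ v, A *ᵥ v = Fin.cons ⟪w, toLp 2 v⟫_ℂ (B *ᵥ Fin.tail v) := fun v => by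
    rw [of_vecCons_vecCons_mulVec, EuclideanSpace.inner_eq_star_dotProduct, dotProduct_comm]
    rfl
  refine ⟨A, blockTriangular_of_vecCons _ hB, opNorm_le_bound _ hK fun v => ?_, ?_⟩
  · show ‖toLp 2 (A *ᵥ ofLp v)‖ ≤ K * ‖v‖
    rw [← sq_le_sq₀ (norm_nonneg _) (by positivity), mul_pow, hAv,
      EuclideanSpace.norm_sq_toLp_cons, toLp_ofLp]
    simpa [hTv] using hw v
  · rw [hAv, hBx, hwx]
    exact Fin.cons_self_tail y

theorem upperTriangular_solve (n : ℕ) (x y : Fin n → ℂ) (K : ℝ) (hK : 0 ≤ K)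
    (h : ∀ r : Fin n, ∑ i ∈ Finset.Ici r, ‖y i‖ ^ 2 ≤ K ^ 2 * ∑ i ∈ Finset.Ici r, ‖x i‖ ^ 2) :
    ∃ A : Matrix (Fin n) (Fin n) ℂ, (∀ i j : Fin n, j < i → A i j = 0) ∧
      ‖Matrix.toEuclideanCLM (𝕜 := ℂ) A‖ ≤ K ∧ A.mulVec x = y := by
  induction n with
  | zero => exact ⟨0, fun i => i.elim0, by simpa using hK, Subsingleton.elim _ _⟩
  | succ n ih =>
    obtain ⟨B, hB, hBK, hBx⟩ := ih (Fin.tail x) (Fin.tail y) fun r => by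
      simpa only [Fin.sum_Ici_succ, Fin.tail] using h r.succ
    obtain ⟨A, hA, hAK, hAx⟩ :=
      exists_upperTriangular_mulVec_eq_of_tail (fun i j => hB i j) hBK hBx (by simpa using h 0)
    exact ⟨A, fun i j => @hA i j, hAK, hAx⟩
end

section
/- Let E be a totally ordered complete family of partial isometries on H whose associated space A_E is an algebra (equivalently, for all V ∈ E either ran V ⊆ (ker V)ᗮ or ran V = H), and suppose the identity operator I belongs to A_E. Then for every V ∈ E, the initial space (ker V)ᗮ is contained in the final space closure(ran V), so A_E contains the nest algebra of the nest of final projections and equals a nest algebra. -/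
open ContinuousLinearMap

variable {H : Type*} [NormedAddCommGroup H] [InnerProductSpace ℂ H] [CompleteSpace H]

/-- `W` is a supremum of `S` among partial isometries, in the Halmos–McLaughlin order. -/
def IsSupHM (S : Set (H →L[ℂ] H)) (W : H →L[ℂ] H) : Prop :=
  (∀ V ∈ S, HMle V W) ∧ ∀ U : H →L[ℂ] H, IsPartialIsometry U → (∀ V ∈ S, HMle V U) → HMle W U

/-- `W` is an infimum of `S` among partial isometries, in the Halmos–McLaughlin order. -/
def IsInfHM (S : Set (H →L[ℂ] H)) (W : H →L[ℂ] H) : Prop :=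
  (∀ V ∈ S, HMle W V) ∧ ∀ U : H →L[ℂ] H, IsPartialIsometry U → (∀ V ∈ S, HMle U V) → HMle U W

/-! `I ∈ A_E` says precisely that each initial space `(ker V)ᗮ` lies in the final space
`closure (ran V)`, so operators leaving the final spaces invariant belong to `A_E`. Conversely,
if `ran V ⊆ (ker V)ᗮ` then the closed space `(ker V)ᗮ` contains `closure (ran V)`, and if
`ran V = H` invariance is automatic. -/

theorem Submodule.mapsTo_closure_of_mapsTo_orthogonal {𝕜 E : Type*} [RCLike 𝕜]
    [NormedAddCommGroup E] [InnerProductSpace 𝕜 E] {K R : Submodule 𝕜 E} {T : E → E}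
    (hR : R ≤ Kᗮ ∨ R = ⊤) (hT : Set.MapsTo T Kᗮ (closure R)) :
    Set.MapsTo T (closure R) (closure R) := by
  rcases hR with hRK | rfl
  · exact hT.mono_left (closure_minimal hRK (Submodule.isClosed_orthogonal K))
  · simp

theorem AE_eq_nestAlgebra_of_identity_mem_general (𝓔 : Set (H →L[ℂ] H))
    (halg : ∀ V ∈ 𝓔, LinearMap.range (V : H →ₗ[ℂ] H) ≤ (LinearMap.ker (V : H →ₗ[ℂ] H))ᗮ ∨ LinearMap.range (V : H →ₗ[ℂ] H) = ⊤)
    (hI : ∀ V ∈ 𝓔, ∀ x ∈ (LinearMap.ker (V : H →ₗ[ℂ] H))ᗮ,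
      (1 : H →L[ℂ] H) x ∈ closure (LinearMap.range (V : H →ₗ[ℂ] H) : Set H)) :
    (∀ V ∈ 𝓔, ((LinearMap.ker (V : H →ₗ[ℂ] H))ᗮ : Set H) ⊆ closure (LinearMap.range (V : H →ₗ[ℂ] H) : Set H)) ∧
    ({T : H →L[ℂ] H | ∀ V ∈ 𝓔, ∀ x ∈ (LinearMap.ker (V : H →ₗ[ℂ] H))ᗮ,
        T x ∈ closure (LinearMap.range (V : H →ₗ[ℂ] H) : Set H)} =
      {T : H →L[ℂ] H | ∀ V ∈ 𝓔, ∀ y ∈ closure (LinearMap.range (V : H →ₗ[ℂ] H) : Set H),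
        T y ∈ closure (LinearMap.range (V : H →ₗ[ℂ] H) : Set H)}) := by
  have initial_le_final : ∀ V ∈ 𝓔, ((LinearMap.ker (V : H →ₗ[ℂ] H))ᗮ : Set H) ⊆
      closure (LinearMap.range (V : H →ₗ[ℂ] H) : Set H) :=
    fun V hV x hx ↦ by simpa using hI V hV x hx
  refine ⟨initial_le_final, Set.ext fun T ↦ ⟨fun hT V hV ↦ ?_, fun hT V hV x hx ↦ ?_⟩⟩
  · exact fun y hy ↦ Submodule.mapsTo_closure_of_mapsTo_orthogonal (halg V hV)
      (fun x hx ↦ hT V hV x hx) hy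
  · exact hT V hV x (initial_le_final V hV hx)

theorem AE_eq_nestAlgebra_of_identity_mem (𝓔 : Set (H →L[ℂ] H))
    (hpi : ∀ V ∈ 𝓔, IsPartialIsometry V)
    (hTO : ∀ E ∈ 𝓔, ∀ F ∈ 𝓔, HMle E F ∨ HMle F E)
    (h0 : (0 : H →L[ℂ] H) ∈ 𝓔)
    (hcomplete : ∀ S ⊆ 𝓔, (∃ W ∈ 𝓔, IsSupHM S W) ∧ (∃ W ∈ 𝓔, IsInfHM S W))
    (halg : ∀ V ∈ 𝓔, LinearMap.range (V : H →ₗ[ℂ] H) ≤ (LinearMap.ker (V : H →ₗ[ℂ] H))ᗮ ∨ LinearMap.range (V : H →ₗ[ℂ] H) = ⊤)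
    (hI : ∀ V ∈ 𝓔, ∀ x ∈ (LinearMap.ker (V : H →ₗ[ℂ] H))ᗮ,
      (1 : H →L[ℂ] H) x ∈ closure (LinearMap.range (V : H →ₗ[ℂ] H) : Set H)) :
    (∀ V ∈ 𝓔, ((LinearMap.ker (V : H →ₗ[ℂ] H))ᗮ : Set H) ⊆ closure (LinearMap.range (V : H →ₗ[ℂ] H) : Set H)) ∧
    ({T : H →L[ℂ] H | ∀ V ∈ 𝓔, ∀ x ∈ (LinearMap.ker (V : H →ₗ[ℂ] H))ᗮ,
        T x ∈ closure (LinearMap.range (V : H →ₗ[ℂ] H) : Set H)} =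
      {T : H →L[ℂ] H | ∀ V ∈ 𝓔, ∀ y ∈ closure (LinearMap.range (V : H →ₗ[ℂ] H) : Set H),
        T y ∈ closure (LinearMap.range (V : H →ₗ[ℂ] H) : Set H)}) :=
  AE_eq_nestAlgebra_of_identity_mem_general 𝓔 halg hI
end
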